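/- arXiv:1209.3933 — 2 statements merged into one kernel-verified Lean document; each statement's English description precedes it below -/
import Mathlib

section
/- Assume κ^{<κ} = κ with κ > ω. The set CUB_ω(κ) = {η ∈ κ^κ | {α < κ : η(α) > 0} contains an ω-cub set} does not have the property of Baire in κ^κ. -/
open Cardinal Ordinal Set Topology
noncomputable section

/-- The generalized Baire space `κ^κ`, realized on the canonical type of order type `κ.ord`. -/
abbrev GBS (κ : Cardinal) : Type := κ.ord.ToType → κ.ord.ToType

/-- Basic open sets `N_η = {f | η ⊆ f}`, for `η` a function defined on an initial
segment `{i | i < b}` (these are exactly the ordinals `α < κ`). -/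
def GBaireBasic (κ : Cardinal) : Set (Set (GBS κ)) :=
  {N | ∃ (b : κ.ord.ToType) (η : κ.ord.ToType → κ.ord.ToType),
        N = {f : GBS κ | ∀ i, i < b → f i = η i}}

/-- The bounded topology on the generalized Baire space. -/
def gbTop (κ : Cardinal) : TopologicalSpace (GBS κ) :=
  TopologicalSpace.generateFrom (GBaireBasic κ)

/-- `X ⊆ κ` is ω-cub: unbounded and closed under suprema of ω-sequences from `X`. -/
def OmegaCub (κ : Cardinal) (X : Set κ.ord.ToType) : Prop :=
  (∀ a : κ.ord.ToType, ∃ x ∈ X, a < x) ∧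
  (∀ f : ℕ → κ.ord.ToType, (∀ n, f n ∈ X) → ∀ y, IsLUB (Set.range f) y → y ∈ X)

/-- `CUB_ω(κ) = {η | {α | η α > 0} contains an ω-cub set}` (here `η α > 0`
means `η α` is not the least element). -/
def CUBomega (κ : Cardinal) : Set (GBS κ) :=
  {η | ∃ X : Set κ.ord.ToType, OmegaCub κ X ∧ X ⊆ {a | ∃ y, y < η a}}

/-- `X` is co-meager: it contains an intersection of `κ` many dense open sets. -/
def GBComeager (κ : Cardinal) (X : Set (GBS κ)) : Prop :=
  ∃ D : κ.ord.ToType → Set (GBS κ),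
    (∀ i, IsOpen[gbTop κ] (D i) ∧
      (∀ V : Set (GBS κ), IsOpen[gbTop κ] V → V.Nonempty → (V ∩ D i).Nonempty)) ∧
    (⋂ i, D i) ⊆ X

/-!
Let the dense open sets `D α`, `α < κ`, witness that `X` is co-meager. As `κ` is regular, a
construction of length `κ` which at stage `α` glues the previous initial segments, writes a value
`v` at the current length and then extends into `D α`, yields inside any basic open set some
`η ∈ ⋂ α, D α` equal to `v` on the club of the lengths reached at the starts of the stages.
With `v > 0` this gives `η ∈ CUB_ω(κ) ∩ X ⊆ U`, so a basic neighbourhood `N` of `η` lies in `U`.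
Running the construction inside `N` with `v = 0` gives `η' ∈ U ∩ X` vanishing on a club; since
`cof κ > ω`, every ω-cub set meets that club, so `η' ∉ CUB_ω(κ)`, a contradiction.
-/

universe u

theorem Cardinal.isRegular_of_powerlt_self_eq {κ : Cardinal} (hκ : ℵ₀ ≤ κ) (h : κ ^< κ = κ) :
    κ.IsRegular :=
  ⟨hκ, le_of_not_gt fun hlt ↦ ((lt_power_cof_ord hκ).trans_le (le_powerlt κ hlt)).ne' h⟩

theorem bddAbove_range_of_mk_lt_cof {α ι : Type u} [LinearOrder α] {f : ι → α}
    (hf : #ι < Order.cof α) : BddAbove (range f) :=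
  .of_not_isCofinal fun hcof ↦ (Order.cof_le hcof).not_gt (mk_range_le.trans_lt hf)

theorem exists_isLUB_range_nat {α : Type} [LinearOrder α] [WellFoundedLT α]
    (hα : ℵ₀ < Order.cof α) (f : ℕ → α) : ∃ s, IsLUB (range f) s := by
  let : Nonempty α := ⟨f 0⟩
  let := WellFoundedLT.toOrderBot α
  let := WellFoundedLT.conditionallyCompleteLinearOrderBot α
  exact ⟨_, isLUB_ciSup (bddAbove_range_of_mk_lt_cof (by simpa using hα))⟩

theorem Cardinal.IsRegular.cof_toType_ord {κ : Cardinal} (hκ : κ.IsRegular) :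
    Order.cof κ.ord.ToType = κ := by
  rw [cof_toType, hκ.cof_ord]

namespace GeneralizedBaire

variable {κ : Cardinal}

theorem _root_.IsClub.omegaCub [NoMaxOrder κ.ord.ToType] {C : Set κ.ord.ToType} (hC : IsClub C) :
    OmegaCub κ C := by
  refine ⟨fun a ↦ ?_, fun f hf y hy ↦ hC.isLUB_mem (range_subset_iff.2 hf) (range_nonempty f) hy⟩
  obtain ⟨b, hab⟩ := exists_gt a
  obtain ⟨x, hx, hbx⟩ := hC.isCofinal b
  exact ⟨x, hx, hab.trans_le hbx⟩

theorem OmegaCub.inter_nonempty [Nonempty κ.ord.ToType]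
    (hlub : ∀ f : ℕ → κ.ord.ToType, ∃ s, IsLUB (range f) s) {X Y : Set κ.ord.ToType}
    (hX : OmegaCub κ X) (hY : OmegaCub κ Y) : (X ∩ Y).Nonempty := by
  choose nx hnxX hnx using hX.1
  choose ny hnyY hny using hY.1
  -- `x 0 < ny (x 0) < x 1 < ny (x 1) < ⋯` alternate between `X` and `Y`, so share their supremum
  let x : ℕ → κ.ord.ToType := fun n ↦ n.rec (nx (Classical.arbitrary _)) fun _ a ↦ nx (ny a)
  obtain ⟨s, hs⟩ := hlub (ny ∘ x)
  have hxs : IsLUB (range x) s := by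
    refine ⟨?_, fun u hu ↦ hs.2 ?_⟩ <;> rintro _ ⟨n, rfl⟩
    · exact (hny _).le.trans (hs.1 ⟨n, rfl⟩)
    · exact (hnx _).le.trans (hu ⟨n + 1, rfl⟩)
  exact ⟨s, hX.2 x (fun n ↦ by cases n <;> apply hnxX) s hxs, hY.2 _ (fun _ ↦ hnyY _) s hs⟩

theorem mem_CUBomega_of_isClub [NoMaxOrder κ.ord.ToType] {η : GBS κ} {C : Set κ.ord.ToType}
    (hC : IsClub C) (hη : ∀ c ∈ C, ¬IsMin (η c)) : η ∈ CUBomega κ :=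
  ⟨C, hC.omegaCub, fun c hc ↦ not_isMin_iff.1 (hη c hc)⟩

theorem not_mem_CUBomega_of_isClub (hκ : ℵ₀ < κ.ord.cof) {η : GBS κ} {C : Set κ.ord.ToType}
    (hC : IsClub C) (hη : ∀ c ∈ C, IsMin (η c)) : η ∉ CUBomega κ := by
  rintro ⟨X, hX, hXpos⟩
  have hκ₀ : ℵ₀ ≤ κ := hκ.le.trans (cof_ord_le κ)
  have := Cardinal.noMaxOrder hκ₀
  have : Nonempty κ.ord.ToType := nonempty_toType_iff.2 (ord_pos.2 (aleph0_pos.trans_le hκ₀)).ne'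
  obtain ⟨c, hcX, hcC⟩ :=
    OmegaCub.inter_nonempty (exists_isLUB_range_nat (by rwa [cof_toType])) hX hC.omegaCub
  exact not_isMin_iff.2 (hXpos hcX) (hη c hcC)

def basicOpen (b : κ.ord.ToType) (g : GBS κ) : Set (GBS κ) := {f | ∀ i < b, f i = g i}

theorem isOpen_basicOpen (b : κ.ord.ToType) (g : GBS κ) : IsOpen[gbTop κ] (basicOpen b g) :=
  .basic _ ⟨b, g, rfl⟩

theorem exists_basicOpen_subset [Nonempty κ.ord.ToType] {U : Set (GBS κ)}
    (hU : IsOpen[gbTop κ] U) {η : GBS κ} (hη : η ∈ U) : ∃ b, basicOpen b η ⊆ U := by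
  induction hU generalizing η with
  | basic N hN =>
    obtain ⟨b, g, rfl⟩ := hN
    exact ⟨b, fun f hf i hi ↦ (hf i hi).trans (hη i hi)⟩
  | univ => exact ⟨Classical.arbitrary _, subset_univ _⟩
  | inter U₁ U₂ _ _ ih₁ ih₂ =>
    obtain ⟨b₁, hb₁⟩ := ih₁ hη.1
    obtain ⟨b₂, hb₂⟩ := ih₂ hη.2
    exact ⟨b₁ ⊔ b₂, fun f hf ↦ ⟨hb₁ fun i hi ↦ hf i (lt_sup_of_lt_left hi),
      hb₂ fun i hi ↦ hf i (lt_sup_of_lt_right hi)⟩⟩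
  | sUnion S _ ih =>
    obtain ⟨s, hs, hηs⟩ := hη
    obtain ⟨b, hb⟩ := ih s hs hηs
    exact ⟨b, hb.trans (subset_sUnion_of_mem hs)⟩

/-- The condition `p` stands for the restriction of `p.val` to `p.len`; `p ≤ q` means that `q`
extends `p`. -/
structure Condition (κ : Cardinal) where
  len : κ.ord.ToType
  val : GBS κ

namespace Condition

def nbhd (p : Condition κ) : Set (GBS κ) := basicOpen p.len p.val

instance : Preorder (Condition κ) where
  le p q := p.len ≤ q.len ∧ q.val ∈ p.nbhd
  le_refl p := ⟨le_rfl, fun _ _ ↦ rfl⟩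
  le_trans p q r hpq hqr :=
    ⟨hpq.1.trans hqr.1, fun i hi ↦ (hqr.2 i (hi.trans_le hpq.1)).trans (hpq.2 i hi)⟩

variable {p q : Condition κ}

theorem val_eq_of_le (h : p ≤ q) {i : κ.ord.ToType} (hi : i < p.len) : q.val i = p.val i :=
  h.2 i hi

theorem nbhd_subset_of_le (h : p ≤ q) : q.nbhd ⊆ p.nbhd :=
  fun _ hf i hi ↦ (hf i (hi.trans_le h.1)).trans (h.2 i hi)

theorem exists_le_nbhd_subset {D : Set (GBS κ)} (hDo : IsOpen[gbTop κ] D)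
    (hDd : ∀ V : Set (GBS κ), IsOpen[gbTop κ] V → V.Nonempty → (V ∩ D).Nonempty)
    (p : Condition κ) : ∃ q, p ≤ q ∧ q.nbhd ⊆ D := by
  obtain ⟨f, hfp, hfD⟩ := hDd _ (isOpen_basicOpen p.len p.val) ⟨p.val, fun _ _ ↦ rfl⟩
  have : Nonempty κ.ord.ToType := ⟨p.len⟩
  obtain ⟨b, hb⟩ := exists_basicOpen_subset hDo hfD
  exact ⟨⟨p.len ⊔ b, f⟩, ⟨le_sup_left, hfp⟩,
    fun g hg ↦ hb fun i hi ↦ hg i (lt_sup_of_lt_right hi)⟩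

def mark (p : Condition κ) (v : κ.ord.ToType) : Condition κ :=
  ⟨Order.succ p.len, Function.update p.val p.len v⟩

theorem le_mark [NoMaxOrder κ.ord.ToType] (p : Condition κ) (v : κ.ord.ToType) : p ≤ p.mark v :=
  ⟨Order.le_succ _, fun _ hi ↦ Function.update_of_ne hi.ne _ _⟩

theorem val_eq_of_mark_le [NoMaxOrder κ.ord.ToType] {v : κ.ord.ToType} (h : p.mark v ≤ q) :
    q.val p.len = v := by
  rw [val_eq_of_le h (Order.lt_succ p.len)]
  exact Function.update_self ..

theorem len_lt_of_mark_le [NoMaxOrder κ.ord.ToType] {v : κ.ord.ToType} (h : p.mark v ≤ q) :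
    p.len < q.len :=
  (Order.lt_succ p.len).trans_le h.1

end Condition

section Glue

variable {ι : Type} {c : ι → Condition κ}

open scoped Classical in
def glueVal (g : GBS κ) (c : ι → Condition κ) : GBS κ :=
  fun i ↦ if h : ∃ j, i < (c j).len then (c h.choose).val i else g i

theorem glueVal_mem_nbhd [LinearOrder ι] (hc : Monotone c) (g : GBS κ) (j : ι) :
    glueVal g c ∈ (c j).nbhd := by
  intro i hi
  have h : ∃ j, i < (c j).len := ⟨j, hi⟩
  simp only [glueVal, dif_pos h]
  rcases le_total h.choose j with hle | hle
  · exact (Condition.val_eq_of_le (hc hle) h.choose_spec).symm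
  · exact Condition.val_eq_of_le (hc hle) hi

theorem glueVal_mem_nbhd_of_le {p : Condition κ} (hp : ∀ j, p ≤ c j) :
    glueVal p.val c ∈ p.nbhd := by
  intro i hi
  unfold glueVal
  split_ifs with h
  · exact Condition.val_eq_of_le (hp _) hi
  · rfl

variable [Nonempty κ.ord.ToType]

attribute [local instance]
  WellFoundedLT.toOrderBot WellFoundedLT.conditionallyCompleteLinearOrderBot

def glue (p : Condition κ) (c : ι → Condition κ) : Condition κ :=
  ⟨p.len ⊔ ⨆ j, (c j).len, glueVal p.val c⟩

theorem le_glue_of_le {p : Condition κ} (hp : ∀ j, p ≤ c j) : p ≤ glue p c :=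
  ⟨le_sup_left, glueVal_mem_nbhd_of_le hp⟩

theorem le_glue [LinearOrder ι] (hc : Monotone c) (hbdd : BddAbove (range fun j ↦ (c j).len))
    (p : Condition κ) (j : ι) : c j ≤ glue p c :=
  ⟨le_sup_of_le_right (le_ciSup hbdd j), glueVal_mem_nbhd hc _ j⟩

theorem len_glue_le {p : Condition κ} {u : κ.ord.ToType} (hp : p.len ≤ u)
    (hc : ∀ j, (c j).len ≤ u) : (glue p c).len ≤ u :=
  sup_le hp (ciSup_le' hc)

end Glue

section Construction

variable (D : κ.ord.ToType → Set (GBS κ))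
  (hD : ∀ α, IsOpen[gbTop κ] (D α) ∧
    ∀ V : Set (GBS κ), IsOpen[gbTop κ] V → V.Nonempty → (V ∩ D α).Nonempty)
  (p₀ : Condition κ) (v : κ.ord.ToType)

def step (α : κ.ord.ToType) (p : Condition κ) : Condition κ :=
  (Condition.exists_le_nbhd_subset (hD α).1 (hD α).2 (p.mark v)).choose

theorem mark_le_step (α : κ.ord.ToType) (p : Condition κ) : p.mark v ≤ step D hD v α p :=
  (Condition.exists_le_nbhd_subset (hD α).1 (hD α).2 (p.mark v)).choose_spec.1

theorem nbhd_step_subset (α : κ.ord.ToType) (p : Condition κ) : (step D hD v α p).nbhd ⊆ D α :=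
  (Condition.exists_le_nbhd_subset (hD α).1 (hD α).2 (p.mark v)).choose_spec.2

variable [Nonempty κ.ord.ToType]

def genericChain (α : κ.ord.ToType) : Condition κ :=
  step D hD v α (glue p₀ fun β : Iio α ↦ genericChain β)
termination_by α
decreasing_by exact β.2

def chainLimit (α : κ.ord.ToType) : Condition κ :=
  glue p₀ fun β : Iio α ↦ genericChain D hD p₀ v β

theorem genericChain_eq (α : κ.ord.ToType) :
    genericChain D hD p₀ v α = step D hD v α (chainLimit D hD p₀ v α) := by
  rw [genericChain, chainLimit]

variable {D hD p₀ v}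

theorem bddAbove_len_genericChain_Iio (hreg : κ.IsRegular) (α : κ.ord.ToType) :
    BddAbove (range fun β : Iio α ↦ (genericChain D hD p₀ v β).len) :=
  bddAbove_range_of_mk_lt_cof (by simpa [hreg.cof_toType_ord] using mk_Iio_lt α (by simp))

theorem chainLimit_le_genericChain (hreg : κ.IsRegular) (α : κ.ord.ToType) :
    chainLimit D hD p₀ v α ≤ genericChain D hD p₀ v α := by
  have := Cardinal.noMaxOrder hreg.aleph0_le
  rw [genericChain_eq]
  exact (Condition.le_mark _ v).trans (mark_le_step D hD v α _)

theorem monotone_genericChain (hreg : κ.IsRegular) : Monotone (genericChain D hD p₀ v) := by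
  suffices h : ∀ α, ∀ β < α, genericChain D hD p₀ v β ≤ genericChain D hD p₀ v α from
    fun β α hβα ↦ hβα.eq_or_lt.elim (fun e ↦ e ▸ le_rfl) (h α β)
  intro α
  induction α using WellFoundedLT.induction with
  | ind α ih =>
    have hmono : Monotone fun β : Iio α ↦ genericChain D hD p₀ v β := fun β γ hβγ ↦
      hβγ.eq_or_lt.elim (fun e ↦ e ▸ le_rfl) fun h ↦ ih γ γ.2 β h
    exact fun β hβ ↦ (le_glue hmono (bddAbove_len_genericChain_Iio hreg α) p₀ ⟨β, hβ⟩).trans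
      (chainLimit_le_genericChain hreg α)

theorem le_genericChain (hreg : κ.IsRegular) (α : κ.ord.ToType) :
    p₀ ≤ genericChain D hD p₀ v α := by
  induction α using WellFoundedLT.induction with
  | ind α ih =>
    exact (le_glue_of_le fun β : Iio α ↦ ih β β.2).trans (chainLimit_le_genericChain hreg α)

theorem len_chainLimit_lt (hreg : κ.IsRegular) (α : κ.ord.ToType) :
    (chainLimit D hD p₀ v α).len < (genericChain D hD p₀ v α).len := by
  have := Cardinal.noMaxOrder hreg.aleph0_le
  rw [genericChain_eq]
  exact Condition.len_lt_of_mark_le (mark_le_step D hD v α _)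

theorem val_genericChain_len_chainLimit (hreg : κ.IsRegular) (α : κ.ord.ToType) :
    (genericChain D hD p₀ v α).val (chainLimit D hD p₀ v α).len = v := by
  have := Cardinal.noMaxOrder hreg.aleph0_le
  rw [genericChain_eq]
  exact Condition.val_eq_of_mark_le (mark_le_step D hD v α _)

theorem len_genericChain_le_len_chainLimit (hreg : κ.IsRegular) {β α : κ.ord.ToType}
    (h : β < α) : (genericChain D hD p₀ v β).len ≤ (chainLimit D hD p₀ v α).len :=
  (le_glue (c := fun γ : Iio α ↦ genericChain D hD p₀ v γ)
    ((monotone_genericChain hreg).comp (Subtype.mono_coe _))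
    (bddAbove_len_genericChain_Iio hreg α) p₀ ⟨β, h⟩).1

theorem isNormal_len_chainLimit (hreg : κ.IsRegular) :
    Order.IsNormal fun α ↦ (chainLimit D hD p₀ v α).len := by
  have := Cardinal.noMaxOrder hreg.aleph0_le
  refine Order.isNormal_iff.2 ⟨fun β α h ↦ (len_chainLimit_lt hreg β).trans_le
    (len_genericChain_le_len_chainLimit hreg h), fun o ho u hu ↦ len_glue_le ?_ ?_⟩
  · obtain ⟨β, hβ⟩ := not_isMin_iff.1 ho.not_isMin
    exact (le_glue_of_le fun γ : Iio β ↦ le_genericChain hreg γ).1.trans (hu β hβ)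
  · intro β
    exact (len_genericChain_le_len_chainLimit hreg (Order.lt_succ β.1)).trans
      (hu _ (ho.succ_lt β.2))

variable (D hD p₀ v) in
def generic : GBS κ := glueVal p₀.val (genericChain D hD p₀ v)

theorem generic_mem_nbhd (hreg : κ.IsRegular) (α : κ.ord.ToType) :
    generic D hD p₀ v ∈ (genericChain D hD p₀ v α).nbhd :=
  glueVal_mem_nbhd (monotone_genericChain hreg) _ α

end Construction

theorem exists_mem_iInter_eq_on_isClub (hreg : κ.IsRegular) (D : κ.ord.ToType → Set (GBS κ))
    (hD : ∀ α, IsOpen[gbTop κ] (D α) ∧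
      ∀ V : Set (GBS κ), IsOpen[gbTop κ] V → V.Nonempty → (V ∩ D α).Nonempty)
    (b : κ.ord.ToType) (g : GBS κ) (v : κ.ord.ToType) :
    ∃ η ∈ basicOpen b g, (∀ α, η ∈ D α) ∧ ∃ C, IsClub C ∧ ∀ c ∈ C, η c = v := by
  have : Nonempty κ.ord.ToType := ⟨b⟩
  let p₀ : Condition κ := ⟨b, g⟩
  refine ⟨generic D hD p₀ v, ?_, fun α ↦ ?_, range fun α ↦ (chainLimit D hD p₀ v α).len,
    (isNormal_len_chainLimit hreg).isClub_range, ?_⟩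
  · exact Condition.nbhd_subset_of_le (p := p₀) (le_genericChain hreg b)
      (generic_mem_nbhd hreg b)
  · exact nbhd_step_subset D hD v α _ (genericChain_eq D hD p₀ v α ▸ generic_mem_nbhd hreg α)
  · rintro _ ⟨α, rfl⟩
    rw [generic_mem_nbhd hreg α _ (len_chainLimit_lt hreg α)]
    exact val_genericChain_len_chainLimit hreg α

end GeneralizedBaire

open GeneralizedBaire in
/-- For `κ > ω`, the set `CUB_ω(κ)` does not have the property of Baire. -/
theorem stmt_11 (κ : Cardinal) (hκ : ℵ₀ < κ) (h : κ ^< κ = κ) :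
    ¬ ∃ (U X : Set (GBS κ)), IsOpen[gbTop κ] U ∧ GBComeager κ X ∧
        CUBomega κ ∩ X = U ∩ X := by
  rintro ⟨U, X, hU, ⟨D, hD, hDX⟩, hEq⟩
  have hreg := isRegular_of_powerlt_self_eq hκ.le h
  have := Cardinal.noMaxOrder hκ.le
  have : Nonempty κ.ord.ToType := nonempty_toType_iff.2 hreg.ord_pos.ne'
  obtain ⟨v₀, hv₀⟩ : ∃ v : κ.ord.ToType, IsMin v :=
    let := WellFoundedLT.toOrderBot κ.ord.ToType; ⟨⊥, isMin_bot⟩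
  obtain ⟨v₁, hv₁⟩ := exists_gt v₀
  obtain ⟨η₁, -, hη₁D, C₁, hC₁, hη₁C⟩ := exists_mem_iInter_eq_on_isClub hreg D hD v₀ id v₁
  have hη₁ : η₁ ∈ CUBomega κ ∩ X := ⟨mem_CUBomega_of_isClub hC₁ fun c hc ↦
    hη₁C c hc ▸ not_isMin_iff.2 ⟨v₀, hv₁⟩, hDX (mem_iInter.2 hη₁D)⟩
  obtain ⟨b, hb⟩ := exists_basicOpen_subset hU (hEq ▸ hη₁).1
  obtain ⟨η₂, hη₂b, hη₂D, C₂, hC₂, hη₂C⟩ := exists_mem_iInter_eq_on_isClub hreg D hD b η₁ v₀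
  have hη₂ : η₂ ∈ CUBomega κ ∩ X := hEq ▸ ⟨hb hη₂b, hDX (mem_iInter.2 hη₂D)⟩
  exact not_mem_CUBomega_of_isClub (by rwa [hreg.cof_ord]) hC₂ (fun c hc ↦ hη₂C c hc ▸ hv₀) hη₂.1
end
end

section
/- Assume κ^{<κ} = κ. Every Borel*(κ) subset of κ^κ is Σ¹₁(κ). -/
open Cardinal Ordinal Set Topology
noncomputable section
/-- `Σ¹₁(κ)`: projections of closed subsets of `κ^κ × κ^κ`. -/
def IsSigma11 (κ : Cardinal) (X : Set (GBS κ)) : Prop :=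
  letI := gbTop κ
  ∃ C : Set (GBS κ × GBS κ), IsClosed C ∧ X = Prod.fst '' C

/-- A leaf of a tree: a maximal element. -/
def IsLeaf {T : Type} [PartialOrder T] (x : T) : Prop := ¬ ∃ y, x < y

/-- `(T, u, f)` is a `Borel*`-code whose tree has no chains of length `lam`:
`T` has size `≤ κ`, all chains have cardinality `< lam`, `T` is a tree
(well-founded with linearly ordered sets of predecessors) with a root, every
nonempty chain has a (unique) supremum (closedness), and leaves are labelled
by basic open sets (`u` labels the interior nodes: `true` = `∪`, `false` = `∩`). -/
def BSCode (κ lam : Cardinal) (T : Type) [PartialOrder T]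
    (u : T → Bool) (f : T → Set (GBS κ)) : Prop :=
  Cardinal.mk T ≤ κ ∧
  (∀ c : Set T, IsChain (· ≤ ·) c → Cardinal.mk c < lam) ∧
  WellFoundedLT T ∧
  (∀ x : T, IsChain (· ≤ ·) (Set.Iio x)) ∧
  (∀ c : Set T, IsChain (· ≤ ·) c → c.Nonempty → ∃ y, IsLUB c y) ∧
  (∃ r : T, ∀ x, r ≤ x) ∧
  (∀ x : T, IsLeaf x → f x ∈ GBaireBasic κ)

/-- A (positional) strategy of player II picks an immediate successor at each
non-leaf `∪`-node. -/
def ValidStrat {T : Type} [PartialOrder T] (u : T → Bool) (s : T → T) : Prop :=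
  ∀ x, ¬ IsLeaf x → u x = true → x ⋖ s x

/-- `P` is (the set of positions of) a play of the `Borel*`-game consistent with
the strategy `s` of player II: a chain starting at the root, proceeding to an
immediate successor at each step (chosen by `s` at `∪`-nodes) and to the unique
supremum of the earlier moves at limits. -/
def IsPlay {T : Type} [PartialOrder T] (u : T → Bool) (s : T → T) (P : Set T) : Prop :=
  IsChain (· ≤ ·) P ∧
  (∀ r : T, (∀ z, r ≤ z) → r ∈ P) ∧
  (∀ x ∈ P, ∀ y ∈ P, x < y → (∀ z ∈ P, z ≤ x ∨ y ≤ z) →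
      x ⋖ y ∧ (u x = true → y = s x)) ∧
  (∀ x ∈ P, (∃ z ∈ P, z < x) →
      (∀ z ∈ P, z < x → ∃ w ∈ P, z < w ∧ w < x) →
      IsLUB {z | z ∈ P ∧ z < x} x)

/-- `s` is a winning strategy for player II in `B*(η, (T, u, f))`: whenever a
play consistent with `s` reaches a leaf `x`, we have `η ∈ f x`. -/
def IIWinsBStar (κ : Cardinal) {T : Type} [PartialOrder T]
    (u : T → Bool) (s : T → T) (f : T → Set (GBS κ)) (η : GBS κ) : Prop :=
  ValidStrat u s ∧ ∀ P, IsPlay u s P → ∀ x ∈ P, IsLeaf x → η ∈ f x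

/-- `X` is coded by the `Borel*`-code `(T, u, f)`. -/
def IsBorelStarAux (κ lam : Cardinal) (T : Type) [PartialOrder T]
    (u : T → Bool) (f : T → Set (GBS κ)) (X : Set (GBS κ)) : Prop :=
  BSCode κ lam T u f ∧ ∀ η, η ∈ X ↔ ∃ s : T → T, IIWinsBStar κ u s f η

/-- `X ⊆ κ^κ` is `Borel*_lam(κ)`; `Borel*(κ)` is the case `lam = κ` and
`Borel*_ω(κ)` (well-founded codes) is the case `lam = ℵ₀`. -/
def IsBorelStar (κ lam : Cardinal) (X : Set (GBS κ)) : Prop :=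
  ∃ (T : Type) (inst : PartialOrder T) (u : T → Bool) (f : T → Set (GBS κ)),
    @IsBorelStarAux κ lam T inst u f X

/-!
A strategy of player II is a self-map of the tree `T`; through an injection `e : T → κ` every
strategy is read off some `σ ∈ κ^κ` as `invFun e ∘ σ ∘ e`. So `X` is the projection of the set of
pairs `(η, σ)` for which `σ` codes a winning strategy of II in `B*(η, T)`. Each condition defining
this set (validity at a node, and `η ∈ f x` whenever a play consistent with the strategy reaches
the leaf `x`) depends on fewer than `κ` coordinates, because plays are chains of `T` and basic
open sets fix a bounded initial segment. As `κ^{<κ} = κ` forces `κ` to be regular, such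
conditions define clopen sets, so the set of pairs is closed.
-/

open Function

section Regularity

variable {κ : Cardinal}

theorem isRegular_of_powerlt_eq_self (hκ : ℵ₀ ≤ κ) (h : κ ^< κ = κ) : κ.IsRegular :=
  ⟨hκ, not_lt.1 fun hlt => (lt_power_cof_ord hκ).not_ge ((le_powerlt κ hlt).trans_eq h)⟩

theorem exists_forall_lt_of_mk_lt (hκ : κ.IsRegular) {S : Set κ.ord.ToType} (hS : #S < κ) :
    ∃ b, ∀ i ∈ S, i < b := by
  have hS' : ¬ IsCofinal S := fun hcof =>
    (Order.cof_le hcof).not_gt (by rwa [Ordinal.cof_toType, hκ.cof_ord])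
  simpa [IsCofinal] using hS'

end Regularity

section Strategies

variable {K β : Type*}

theorem Function.Injective.surjective_invFun_comp_comp {T : Type*} [Nonempty T] {e : T → K}
    (he : Injective e) : Surjective fun σ : K → K => invFun e ∘ σ ∘ e := fun s =>
  ⟨extend e (e ∘ s) id, funext fun x => by
    simp only [comp_apply, he.extend_apply, leftInverse_invFun he (s x)]⟩

theorem DependsOn.comp_conj {T : Type*} {Φ : (T → T) → β} {P : Set T} (hΦ : DependsOn Φ P)
    (g : K → T) (e : T → K) : DependsOn (fun σ : K → K => Φ (g ∘ σ ∘ e)) (e '' P) :=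
  fun _ _ h => hΦ fun x hx => by simp only [comp_apply, h (e x) (mem_image_of_mem e hx)]

variable {T : Type} [PartialOrder T] {u : T → Bool}

theorem IsPlay.congr {s s' : T → T} {P : Set T} (hP : IsPlay u s P) (hss : EqOn s s' P) :
    IsPlay u s' P := by
  obtain ⟨hchain, hroot, hsucc, hlim⟩ := hP
  refine ⟨hchain, hroot, fun x hx y hy hxy hint => ?_, hlim⟩
  obtain ⟨hcov, hu⟩ := hsucc x hx y hy hxy hint
  exact ⟨hcov, fun hux => hss hx ▸ hu hux⟩

theorem dependsOn_isPlay (P : Set T) : DependsOn (fun s => IsPlay u s P) P :=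
  fun _ _ h => propext ⟨fun hP => hP.congr h, fun hP => hP.congr fun x hx => (h x hx).symm⟩

end Strategies

section BoundedTopology

attribute [local instance] gbTop

variable {κ : Cardinal}

theorem isOpen_setOf_of_dependsOn (hκ : κ.IsRegular) {p : GBS κ → Prop}
    {S : Set κ.ord.ToType} (hS : #S < κ) (hp : DependsOn p S) : IsOpen {g | p g} := by
  obtain ⟨b, hb⟩ := exists_forall_lt_of_mk_lt hκ hS
  refine isOpen_iff_forall_mem_open.2 fun g hg =>
    ⟨{g' | ∀ i < b, g' i = g i}, fun g' hg' => ?_,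
      TopologicalSpace.isOpen_generateFrom_of_mem ⟨b, g, rfl⟩, fun _ _ => rfl⟩
  have hpg : p g' = p g := hp fun i hi => hg' i (hb i hi)
  rwa [mem_ofPred_eq, hpg]

theorem isClosed_setOf_of_dependsOn (hκ : κ.IsRegular) {p : GBS κ → Prop}
    {S : Set κ.ord.ToType} (hS : #S < κ) (hp : DependsOn p S) : IsClosed {g | p g} :=
  isOpen_compl_iff.1 <| isOpen_setOf_of_dependsOn hκ hS fun _ _ h => congrArg Not (hp h)

theorem isClosed_of_mem_gBaireBasic (hκ : κ.IsRegular) {N : Set (GBS κ)}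
    (hN : N ∈ GBaireBasic κ) : IsClosed N := by
  obtain ⟨b, η, rfl⟩ := hN
  refine isClosed_setOf_of_dependsOn hκ (S := Iio b) (by simpa using mk_Iio_lt b)
    fun g g' h => propext (forall₂_congr fun i hi => ?_)
  rw [h i hi]

variable {T : Type} [PartialOrder T] [Nonempty T] {u : T → Bool}
  {f : T → Set (GBS κ)}

theorem isClosed_setOf_iIWinsBStar (hκ : κ.IsRegular)
    (hchain : ∀ c : Set T, IsChain (· ≤ ·) c → #c < κ)
    (hleaf : ∀ x : T, IsLeaf x → f x ∈ GBaireBasic κ) (e : T → κ.ord.ToType) :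
    IsClosed {p : GBS κ × GBS κ | IIWinsBStar κ u (invFun e ∘ p.2 ∘ e) f p.1} := by
  have hvalid : IsClosed {σ : GBS κ | ValidStrat u (invFun e ∘ σ ∘ e)} := by
    unfold ValidStrat
    rw [ofPred_forall]
    refine isClosed_iInter fun x => isClosed_setOf_of_dependsOn hκ (S := e '' {x})
      (by simpa using hκ.nat_lt 1) <|
      DependsOn.comp_conj (Φ := fun s => ¬IsLeaf x → u x = true → x ⋖ s x)
        (fun s s' h => by simp only [h x rfl]) _ e
  have hplay (P : Set T) : IsOpen {σ : GBS κ | IsPlay u (invFun e ∘ σ ∘ e) P} := by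
    by_cases hP : IsChain (· ≤ ·) P
    · exact isOpen_setOf_of_dependsOn hκ (mk_image_le.trans_lt (hchain P hP))
        ((dependsOn_isPlay P).comp_conj _ e)
    · convert isOpen_empty
      exact eq_empty_of_forall_notMem fun σ hσ => hP hσ.1
  have hwin (P : Set T) : IsClosed {η : GBS κ | ∀ x ∈ P, IsLeaf x → η ∈ f x} := by
    simp only [ofPred_forall, ofPred_mem_eq]
    exact isClosed_biInter fun x _ => isClosed_iInter fun hx =>
      isClosed_of_mem_gBaireBasic hκ (hleaf x hx)
  unfold IIWinsBStar
  rw [ofPred_and, ofPred_forall]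
  exact (hvalid.preimage continuous_snd).inter <| isClosed_iInter fun P =>
    isClosed_imp ((hplay P).preimage continuous_snd) ((hwin P).preimage continuous_fst)

end BoundedTopology

/-- Every `Borel*(κ)` subset of `κ^κ` is `Σ¹₁(κ)`. -/
theorem stmt_17 (κ : Cardinal) (hκ : ℵ₀ ≤ κ) (h : κ ^< κ = κ)
    (X : Set (GBS κ)) (hX : IsBorelStar κ κ X) :
    IsSigma11 κ X := by
  obtain ⟨T, _, u, f, ⟨hT, hchain, -, -, -, ⟨r, -⟩, hleaf⟩, hmem⟩ := hX
  have : Nonempty T := ⟨r⟩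
  obtain ⟨e⟩ : Nonempty (T ↪ κ.ord.ToType) := by rwa [← Cardinal.le_def, mk_ord_toType]
  refine ⟨_, isClosed_setOf_iIWinsBStar (u := u) (isRegular_of_powerlt_eq_self hκ h) hchain
    hleaf e, ?_⟩
  ext η
  rw [hmem]
  constructor
  · rintro ⟨s, hs⟩
    obtain ⟨σ, rfl⟩ := e.injective.surjective_invFun_comp_comp s
    exact ⟨(η, σ), hs, rfl⟩
  · rintro ⟨⟨_, σ⟩, hσ, rfl⟩
    exact ⟨_, hσ⟩
end
end
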